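/- Assume r > 1/2 (equivalently n ≥ m). If λ₁ > 0 and λ₂ > 0 are both eigenvalues of the four-variable system (S), then λ₁ = λ₂. -/
import Mathlib


open Finset

/-- The four-variable system (S), with variables `y1 = y_1`, `yn = y_n`,
`yn1 = y_{n+1}`, `ynm = y_{n+m}`. -/
def Ssol (n m : ℕ) (a : ℕ → ℝ) (lam y1 yn yn1 ynm : ℝ) : Prop :=
  yn = min ((1 - (a n + a (n + m))) - 2 * lam + y1 + yn1 - ynm)
      ((∑ i ∈ Finset.Icc 1 (n - 1), a i) - ((n : ℝ) - 1) * lam + y1) ∧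
  ynm = min ((1 - (a n + a (n + m))) - lam + y1 + yn1 - yn)
      ((∑ i ∈ Finset.Icc (n + 1) (n + m - 1), a i) - ((m : ℝ) - 1) * lam + yn1) ∧
  y1 = min (a n - lam + (yn + ynm) / 2)
      ((∑ i ∈ Finset.Icc 1 (n - 1), (1 - a i)) - ((n : ℝ) - 1) * lam + yn) ∧
  yn1 = min (a (n + m) - lam + (yn + ynm) / 2)
      ((∑ i ∈ Finset.Icc (n + 1) (n + m - 1), (1 - a i)) - ((m : ℝ) - 1) * lam + ynm)

/-- From any solution of (S) with positive eigenvalue, four explicit affine functions of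
`lam` (corresponding to the cycles `P-P'`, `P-Q'`, `Q-P'`, `Q-Q'` in the reduced system)
are nonnegative, and at least one vanishes. -/
lemma stmt15_key (n m : ℕ) (hn : 2 ≤ n) (hm : 2 ≤ m) (a : ℕ → ℝ) (lam : ℝ) (hl : 0 < lam)
    (y1 yn yn1 ynm : ℝ) (h : Ssol n m a lam y1 yn yn1 ynm) :
    (0 ≤ 1 - 4 * lam ∧
     0 ≤ (1 - (a n + a (n + m))) - (∑ i ∈ Finset.Icc (n+1) (n+m-1), a i)
         + (∑ i ∈ Finset.Icc 1 (n-1), (1 - a i)) - ((n:ℝ) - (m:ℝ) + 2) * lam ∧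
     0 ≤ (a n + a (n+m)) + (∑ i ∈ Finset.Icc 1 (n-1), a i)
         + (∑ i ∈ Finset.Icc (n+1) (n+m-1), a i) - ((n:ℝ) + (m:ℝ)) * lam ∧
     0 ≤ (∑ i ∈ Finset.Icc 1 (n-1), a i) + (∑ i ∈ Finset.Icc 1 (n-1), (1 - a i))
         - 2 * (((n:ℝ) - 1) * lam)) ∧
    (1 - 4 * lam = 0 ∨
     (1 - (a n + a (n + m))) - (∑ i ∈ Finset.Icc (n+1) (n+m-1), a i)
         + (∑ i ∈ Finset.Icc 1 (n-1), (1 - a i)) - ((n:ℝ) - (m:ℝ) + 2) * lam = 0 ∨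
     (a n + a (n+m)) + (∑ i ∈ Finset.Icc 1 (n-1), a i)
         + (∑ i ∈ Finset.Icc (n+1) (n+m-1), a i) - ((n:ℝ) + (m:ℝ)) * lam = 0 ∨
     (∑ i ∈ Finset.Icc 1 (n-1), a i) + (∑ i ∈ Finset.Icc 1 (n-1), (1 - a i))
         - 2 * (((n:ℝ) - 1) * lam) = 0) := by
  unfold Ssol at h
  obtain ⟨h1, h2, h3, h4⟩ := h
  have hA1 := h1.le.trans (min_le_left _ _)
  have hB1 := h1.le.trans (min_le_right _ _)
  have hA2 := h2.le.trans (min_le_left _ _)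
  have hA3 := h3.le.trans (min_le_left _ _)
  have hB3 := h3.le.trans (min_le_right _ _)
  have hA4 := h4.le.trans (min_le_left _ _)
  have h27 : lam ≤ 2/7 := by linarith
  have hm2 : (2:ℝ) ≤ (m:ℝ) := by exact_mod_cast hm
  -- second equation takes its B branch
  have hB2eq : ynm = (∑ i ∈ Finset.Icc (n+1) (n+m-1), a i) - ((m:ℝ) - 1) * lam + yn1 := by
    rcases min_cases ((1 - (a n + a (n + m))) - lam + y1 + yn1 - yn)
      ((∑ i ∈ Finset.Icc (n + 1) (n + m - 1), a i) - ((m : ℝ) - 1) * lam + yn1) with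
      ⟨he, _⟩ | ⟨he, _⟩
    · exfalso
      have := h2.trans he
      linarith
    · exact h2.trans he
  -- the sum identity  b_m + b̄_m = m - 1
  have hcard : (Finset.Icc (n+1) (n+m-1)).card = m - 1 := by
    rw [Nat.card_Icc]; omega
  have hsum2 : (∑ i ∈ Finset.Icc (n+1) (n+m-1), a i)
      + (∑ i ∈ Finset.Icc (n+1) (n+m-1), (1 - a i)) = (m:ℝ) - 1 := by
    rw [← Finset.sum_add_distrib]
    rw [Finset.sum_congr rfl (fun i _ => show a i + (1 - a i) = (1:ℝ) by ring)]
    rw [Finset.sum_const, hcard, nsmul_eq_mul, mul_one]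
    rw [Nat.cast_sub (by omega : 1 ≤ m), Nat.cast_one]
  -- fourth equation takes its A branch
  have hA4eq : yn1 = a (n+m) - lam + (yn + ynm) / 2 := by
    rcases min_cases (a (n + m) - lam + (yn + ynm) / 2)
      ((∑ i ∈ Finset.Icc (n + 1) (n + m - 1), (1 - a i)) - ((m : ℝ) - 1) * lam + ynm) with
      ⟨he, _⟩ | ⟨he, _⟩
    · exact h4.trans he
    · exfalso
      have hB4eq := h4.trans he
      have hmul : ((m:ℝ) - 1) * lam ≤ ((m:ℝ) - 1) * (2/7) :=
        mul_le_mul_of_nonneg_left h27 (by linarith)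
      linarith
  have hd1 : yn = (1 - (a n + a (n + m))) - 2 * lam + y1 + yn1 - ynm ∨
      yn = (∑ i ∈ Finset.Icc 1 (n - 1), a i) - ((n : ℝ) - 1) * lam + y1 := by
    rcases min_cases ((1 - (a n + a (n + m))) - 2 * lam + y1 + yn1 - ynm)
      ((∑ i ∈ Finset.Icc 1 (n - 1), a i) - ((n : ℝ) - 1) * lam + y1) with ⟨he, _⟩ | ⟨he, _⟩
    · exact Or.inl (h1.trans he)
    · exact Or.inr (h1.trans he)
  have hd3 : y1 = a n - lam + (yn + ynm) / 2 ∨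
      y1 = (∑ i ∈ Finset.Icc 1 (n - 1), (1 - a i)) - ((n : ℝ) - 1) * lam + yn := by
    rcases min_cases (a n - lam + (yn + ynm) / 2)
      ((∑ i ∈ Finset.Icc 1 (n - 1), (1 - a i)) - ((n : ℝ) - 1) * lam + yn) with ⟨he, _⟩ | ⟨he, _⟩
    · exact Or.inl (h3.trans he)
    · exact Or.inr (h3.trans he)
  refine ⟨⟨by linarith, by linarith, by linarith, by linarith⟩, ?_⟩
  rcases hd1 with e1 | e1 <;> rcases hd3 with e3 | e3
  · exact Or.inl (by linarith)
  · exact Or.inr (Or.inl (by linarith))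
  · exact Or.inr (Or.inr (Or.inl (by linarith)))
  · exact Or.inr (Or.inr (Or.inr (by linarith)))

theorem stmt15 (n m : ℕ) (hn : 2 ≤ n) (hm : 2 ≤ m) (a : ℕ → ℝ)
    (ha : ∀ i : ℕ, 1 ≤ i → i ≤ n + m → 0 ≤ a i ∧ a i ≤ 1)
    (hprio : a n + a (n + m) ≤ 1)
    (r : ℝ) (hr : r = (n : ℝ) / ((n : ℝ) + (m : ℝ) - 1)) (hr2 : 1 / 2 < r)
    (lam₁ lam₂ : ℝ) (h₁ : 0 < lam₁) (h₂ : 0 < lam₂)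
    (he₁ : ∃ y1 yn yn1 ynm : ℝ, Ssol n m a lam₁ y1 yn yn1 ynm)
    (he₂ : ∃ y1 yn yn1 ynm : ℝ, Ssol n m a lam₂ y1 yn yn1 ynm) :
    lam₁ = lam₂ := by
  obtain ⟨u1, un, un1, unm, hs1⟩ := he₁
  obtain ⟨v1, vn, vn1, vnm, hs2⟩ := he₂
  have k1 := stmt15_key n m hn hm a lam₁ h₁ u1 un un1 unm hs1
  have k2 := stmt15_key n m hn hm a lam₂ h₂ v1 vn vn1 vnm hs2
  have hn2 : (2:ℝ) ≤ (n:ℝ) := by exact_mod_cast hn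
  have hm2 : (2:ℝ) ≤ (m:ℝ) := by exact_mod_cast hm
  have hd : (0:ℝ) < (n:ℝ) + (m:ℝ) - 1 := by linarith
  have hmn : (m:ℝ) < (n:ℝ) + 1 := by
    rw [hr, lt_div_iff₀ hd] at hr2; linarith
  have step : ∀ u v : ℝ,
      (1 - 4 * u = 0 ∨
       (1 - (a n + a (n + m))) - (∑ i ∈ Finset.Icc (n+1) (n+m-1), a i)
           + (∑ i ∈ Finset.Icc 1 (n-1), (1 - a i)) - ((n:ℝ) - (m:ℝ) + 2) * u = 0 ∨
       (a n + a (n+m)) + (∑ i ∈ Finset.Icc 1 (n-1), a i)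
           + (∑ i ∈ Finset.Icc (n+1) (n+m-1), a i) - ((n:ℝ) + (m:ℝ)) * u = 0 ∨
       (∑ i ∈ Finset.Icc 1 (n-1), a i) + (∑ i ∈ Finset.Icc 1 (n-1), (1 - a i))
           - 2 * (((n:ℝ) - 1) * u) = 0) →
      (0 ≤ 1 - 4 * v ∧
       0 ≤ (1 - (a n + a (n + m))) - (∑ i ∈ Finset.Icc (n+1) (n+m-1), a i)
           + (∑ i ∈ Finset.Icc 1 (n-1), (1 - a i)) - ((n:ℝ) - (m:ℝ) + 2) * v ∧
       0 ≤ (a n + a (n+m)) + (∑ i ∈ Finset.Icc 1 (n-1), a i)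
           + (∑ i ∈ Finset.Icc (n+1) (n+m-1), a i) - ((n:ℝ) + (m:ℝ)) * v ∧
       0 ≤ (∑ i ∈ Finset.Icc 1 (n-1), a i) + (∑ i ∈ Finset.Icc 1 (n-1), (1 - a i))
           - 2 * (((n:ℝ) - 1) * v)) → v ≤ u := by
    intro u v hu hv
    obtain ⟨hv1, hv2, hv3, hv4⟩ := hv
    by_contra hc
    push_neg at hc
    rcases hu with e | e | e | e
    · linarith
    · have := mul_lt_mul_of_pos_left hc (show (0:ℝ) < (n:ℝ) - (m:ℝ) + 2 by linarith)
      linarith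
    · have := mul_lt_mul_of_pos_left hc (show (0:ℝ) < (n:ℝ) + (m:ℝ) by linarith)
      linarith
    · have := mul_lt_mul_of_pos_left hc (show (0:ℝ) < (n:ℝ) - 1 by linarith)
      linarith
  exact le_antisymm (step lam₂ lam₁ k2.2 k1.1) (step lam₁ lam₂ k1.2 k2.1)
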